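/- Let M⋆ = sup_{z ∈ 𝕋^m} |A⋆(z)|. For every M ∈ (0,∞) and all continuous functions B₁, B₂ : 𝕋^m → ℝ with sup|B₁| ≤ M and sup|B₂| ≤ M, one has d_TV(μ_{B₁}, μ_{B₂}) ≤ 2 e^{4(M + M⋆)} · sup_{z ∈ 𝕋^m} |B₁(z) − B₂(z)|. -/

import Mathlib

open MeasureTheory

noncomputable section

/-- `E n` is the Euclidean space `ℝ^n`; the flat torus `𝕋^n` is modelled by
`1`-periodic functions on `E n`, with the box `[0,1)^n` as fundamental domain,
carrying the (normalized, since the box has volume one) Lebesgue measure. -/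
abbrev E (n : ℕ) : Type := EuclideanSpace ℝ (Fin n)

/-- The fundamental domain `[0,1)^n` of the torus `𝕋^n`. -/
def torusBox (n : ℕ) : Set (E n) := {x : E n | ∀ i, x i ∈ Set.Ico (0 : ℝ) 1}

/-- The `j`-th coordinate unit vector. -/
def e1 {n : ℕ} (j : Fin n) : E n := EuclideanSpace.single j 1

/-- A function on the torus `𝕋^n`: a function on `ℝ^n` which is `1`-periodic in
each coordinate. -/
def PerZ {n : ℕ} {α : Type*} (f : E n → α) : Prop :=
  ∀ (x : E n) (j : Fin n), f (x + e1 j) = f x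

/-- A function on `𝕋^k × 𝕋^m`. -/
def PerZ2 {k m : ℕ} {α : Type*} (f : E k × E m → α) : Prop :=
  (∀ (y : E k) (z : E m) (j : Fin k), f (y + e1 j, z) = f (y, z)) ∧
  (∀ (y : E k) (z : E m) (j : Fin m), f (y, z + e1 j) = f (y, z))

/-- The quotient (torus) distance on `𝕋^n`. -/
def tdist {n : ℕ} (x y : E n) : ℝ :=
  ⨅ v : Fin n → ℤ, ‖x - y + (WithLp.equiv 2 (Fin n → ℝ)).symm (fun i => (v i : ℝ))‖

/-- The quotient (torus) distance on `𝕋^k × 𝕋^m`. -/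
def tdist2 {k m : ℕ} (x y : E k × E m) : ℝ :=
  Real.sqrt (tdist x.1 y.1 ^ 2 + tdist x.2 y.2 ^ 2)

/-- The gradient `∇_z V` in the `z` variable. -/
def zgrad {k m : ℕ} (V : E k × E m → ℝ) (y : E k) (z : E m) : E m :=
  gradient (fun z' => V (y, z')) z

/-- The Laplacian on `E n`. -/
def lap {n : ℕ} (A : E n → ℝ) (z : E n) : ℝ :=
  ∑ j, fderiv ℝ (fun w => fderiv ℝ A w (e1 j)) z (e1 j)

/-- The divergence on `E n`. -/
def divg {n : ℕ} (F : E n → E n) (z : E n) : ℝ :=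
  ∑ j, fderiv ℝ (fun w => F w j) z (e1 j)

/-- The free energy `A⋆`. -/
def Astar {k m : ℕ} (V : E k × E m → ℝ) (z : E m) : ℝ :=
  - Real.log (∫ y in torusBox k, Real.exp (- V (y, z)))

/-- The zero-average free energy `Ā⋆ = A⋆ - ∫ A⋆`. -/
def AstarBar {k m : ℕ} (V : E k × E m → ℝ) (z : E m) : ℝ :=
  Astar V z - ∫ w in torusBox m, Astar V w

/-- The (normalized) Haar measure of `𝕋^d = 𝕋^k × 𝕋^m` in the periodic model. -/
def haarT (k m : ℕ) : Measure (E k × E m) :=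
  volume.restrict (torusBox k ×ˢ torusBox m)

/-- The normalization constant `Z_B`. -/
def ZB {k m : ℕ} (V : E k × E m → ℝ) (B : E m → ℝ) : ℝ :=
  ∫ x, Real.exp (- V x + B x.2) ∂(haarT k m)

/-- The density `h_B`. -/
def hB {k m : ℕ} (V : E k × E m → ℝ) (B : E m → ℝ) (x : E k × E m) : ℝ :=
  (ZB V B)⁻¹ * Real.exp (- V x + B x.2)

/-- The probability measure `μ_B` with density `h_B` w.r.t. the Haar measure. -/
def muB {k m : ℕ} (V : E k × E m → ℝ) (B : E m → ℝ) : Measure (E k × E m) :=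
  (haarT k m).withDensity fun x => ENNReal.ofReal (hB V B x)

/-- An admissible kernel on `𝕋^m`: smooth, positive, and with both marginals
normalized to one. -/
structure AdmKer (m : ℕ) (K : E m × E m → ℝ) : Prop where
  smooth : ContDiff ℝ (⊤ : ℕ∞) K
  pos : ∀ p, 0 < K p
  periodic : PerZ2 K
  int_right : ∀ z : E m, (∫ z' in torusBox m, K (z, z')) = 1
  int_left : ∀ z : E m, (∫ z' in torusBox m, K (z', z)) = 1

/-- The second-moment bound for an admissible kernel, with constant `cK`. -/
def KerMoment (m : ℕ) (ε cK : ℝ) (K : E m × E m → ℝ) : Prop :=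
  ∀ z : E m, (∫ z' in torusBox m, tdist z z' ^ 2 * (K (z', z) + K (z, z'))) ≤ cK * ε

/-- The regularized mean force `F^ε[μ]`. -/
def Feps {k m : ℕ} (V : E k × E m → ℝ) (K : E m × E m → ℝ)
    (μ : Measure (E k × E m)) (w : E m) : E m :=
  (∫ x, K (x.2, w) ∂μ)⁻¹ • ∫ x, K (x.2, w) • zgrad V x.1 x.2 ∂μ

/-- Total variation distance. -/
def dTV {X : Type*} [MeasurableSpace X] (μ ν : Measure X) : ℝ :=
  sSup {r : ℝ | ∃ ψ : X → ℝ, Measurable ψ ∧ (∀ x, |ψ x| ≤ 1) ∧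
    r = |(∫ x, ψ x ∂ν) - ∫ x, ψ x ∂μ| / 2}

/-- Wasserstein-1 distance on the torus `𝕋^k × 𝕋^m`. -/
def dW1 {k m : ℕ} (μ ν : Measure (E k × E m)) : ℝ :=
  sSup {r : ℝ | ∃ ψ : E k × E m → ℝ, (∀ a b, |ψ a - ψ b| ≤ tdist2 a b) ∧
    r = |(∫ x, ψ x ∂ν) - ∫ x, ψ x ∂μ|}

/-- Wasserstein-1 distance on the torus `𝕋^n`. -/
def dW1d {n : ℕ} (μ ν : Measure (E n)) : ℝ :=
  sSup {r : ℝ | ∃ ψ : E n → ℝ, (∀ a b, |ψ a - ψ b| ≤ tdist a b) ∧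
    r = |(∫ x, ψ x ∂ν) - ∫ x, ψ x ∂μ|}

/-- The `C^k` norm `‖φ‖_{C^N} = ∑_{j ≤ N} sup ‖∇^j φ‖`. -/
def CkNorm {n : ℕ} {F : Type*} [NormedAddCommGroup F] [NormedSpace ℝ F]
    (N : ℕ) (φ : E n → F) : ℝ :=
  ∑ j ∈ Finset.range (N + 1), ⨆ z : E n, ‖iteratedFDeriv ℝ j φ z‖

/-! Both measures have densities proportional to `f_B = exp (-V + B)` with respect to the Haar
measure, and `|f_{B₂} - f_{B₁}| ≤ e^{2M} δ f_{B₁}` pointwise, where `δ = sup |B₁ - B₂|`. For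
normalized densities such a relative bound `|g - f| ≤ c f` gives `d_TV ≤ c`: it controls both
`∫ |g - f|` and the difference of the normalizing constants by `c ∫ f`. Hence
`d_TV(μ_{B₁}, μ_{B₂}) ≤ e^{2M} δ ≤ 2 e^{4(M + M⋆)} δ`. -/

open Bornology Set

lemma torusBox_eq_preimage (n : ℕ) :
    torusBox n = WithLp.ofLp ⁻¹' univ.pi fun _ : Fin n => Ico (0 : ℝ) 1 := by
  ext x
  simp [torusBox]

lemma volume_torusBox (n : ℕ) : volume (torusBox n) = 1 := by
  rw [torusBox_eq_preimage, (PiLp.volume_preserving_ofLp (Fin n)).measure_preimage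
    (MeasurableSet.univ_pi fun _ => measurableSet_Ico).nullMeasurableSet]
  simp [volume_pi_pi]

lemma isBounded_torusBox (n : ℕ) : IsBounded (torusBox n) := by
  rw [torusBox_eq_preimage]
  exact (PiLp.antilipschitzWith_ofLp 2 _).isBounded_preimage
    (IsBounded.pi fun _ => Metric.isBounded_Ico 0 1)

instance (k m : ℕ) : IsProbabilityMeasure (haarT k m) :=
  ⟨by rw [haarT, Measure.restrict_apply_univ, Measure.volume_eq_prod, Measure.prod_prod,
    volume_torusBox, volume_torusBox, one_mul]⟩

lemma Continuous.integrable_haarT {k m : ℕ} {f : E k × E m → ℝ} (hf : Continuous f) :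
    Integrable f (haarT k m) :=
  (hf.continuousOn.integrableOn_compact
    ((isBounded_torusBox k).prod (isBounded_torusBox m)).isCompact_closure).mono_set
    subset_closure

lemma Real.abs_exp_sub_exp_le_exp_mul {a b M : ℝ} (ha : a ≤ M) (hb : b ≤ M) :
    |Real.exp a - Real.exp b| ≤ Real.exp M * |a - b| := by
  wlog hba : b ≤ a generalizing a b
  · rw [abs_sub_comm, abs_sub_comm a]
    exact this hb ha (le_of_not_ge hba)
  rw [abs_of_nonneg (sub_nonneg.2 (Real.exp_le_exp.2 hba)), abs_of_nonneg (sub_nonneg.2 hba)]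
  have h : Real.exp b = Real.exp (b - a) * Real.exp a := by rw [← Real.exp_add, sub_add_cancel]
  nlinarith [Real.add_one_le_exp (b - a), Real.exp_le_exp.2 ha, Real.exp_pos a]

lemma Real.abs_exp_add_sub_exp_add_le (v : ℝ) {a b M : ℝ} (ha : |a| ≤ M) (hb : |b| ≤ M) :
    |Real.exp (v + b) - Real.exp (v + a)| ≤ Real.exp (2 * M) * |b - a| * Real.exp (v + a) := by
  have hv : Real.exp v ≤ Real.exp M * Real.exp (v + a) := by
    rw [← Real.exp_add]
    exact Real.exp_le_exp.2 (by linarith [neg_abs_le a])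
  rw [Real.exp_add v b, Real.exp_add v a, ← mul_sub, abs_mul, Real.abs_exp, two_mul,
    Real.exp_add, ← Real.exp_add v a]
  calc Real.exp v * |Real.exp b - Real.exp a|
      ≤ Real.exp M * Real.exp (v + a) * (Real.exp M * |b - a|) :=
        mul_le_mul hv (Real.abs_exp_sub_exp_le_exp_mul (le_of_abs_le hb) (le_of_abs_le ha))
          (abs_nonneg _) (by positivity)
    _ = _ := by ring

lemma abs_inv_mul_sub_inv_mul_le {Zf Zg If Ig D : ℝ} (hZf : 0 < Zf) (hZg : 0 < Zg)
    (hIg : |Ig| ≤ Zg) (hZ : |Zg - Zf| ≤ D) (hI : |Ig - If| ≤ D) :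
    |Zg⁻¹ * Ig - Zf⁻¹ * If| ≤ 2 * D / Zf := by
  have hsplit : Zg⁻¹ * Ig - Zf⁻¹ * If = ((Ig - If) - (Zg - Zf) * (Zg⁻¹ * Ig)) / Zf := by
    field_simp
    ring
  have hIg' : |Zg⁻¹ * Ig| ≤ 1 := by
    rw [abs_mul, abs_inv, abs_of_pos hZg, inv_mul_le_one₀ hZg]
    exact hIg
  rw [hsplit, abs_div, abs_of_pos hZf]
  gcongr
  calc |Ig - If - (Zg - Zf) * (Zg⁻¹ * Ig)| ≤ D + D * 1 := by
        refine (abs_sub _ _).trans (add_le_add hI ?_)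
        rw [abs_mul]
        exact mul_le_mul hZ hIg' (abs_nonneg _) ((abs_nonneg _).trans hZ)
    _ = 2 * D := by ring

section WithDensity

variable {X : Type*} [MeasurableSpace X] {μ : Measure X}

lemma integral_withDensity_ofReal {f : X → ℝ} (hf : Measurable f) (hf0 : 0 ≤ f) (g : X → ℝ) :
    ∫ x, g x ∂μ.withDensity (fun x => ENNReal.ofReal (f x)) = ∫ x, f x * g x ∂μ := by
  rw [show (fun x => ENNReal.ofReal (f x)) = fun x => ((f x).toNNReal : ENNReal) from rfl,
    integral_withDensity_eq_integral_smul hf.real_toNNReal]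
  simp only [NNReal.smul_def, smul_eq_mul, Real.coe_toNNReal _ (hf0 _)]

lemma abs_integral_mul_le_integral_abs {ψ h : X → ℝ} (hψ : ∀ x, |ψ x| ≤ 1)
    (hh : Integrable h μ) : |∫ x, h x * ψ x ∂μ| ≤ ∫ x, |h x| ∂μ :=
  norm_integral_le_of_norm_le (f := fun x => h x * ψ x) hh.abs (ae_of_all _ fun x => by
    rw [Real.norm_eq_abs, abs_mul]
    exact mul_le_of_le_one_right (abs_nonneg _) (hψ x))

lemma dTV_withDensity_le {f g : X → ℝ} (hf : Measurable f) (hg : Measurable g)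
    (hf0 : 0 ≤ f) (hg0 : 0 ≤ g) (hfi : Integrable f μ) (hgi : Integrable g μ)
    (hZf : 0 < ∫ x, f x ∂μ) (hZg : 0 < ∫ x, g x ∂μ) {c : ℝ}
    (hgf : ∀ x, |g x - f x| ≤ c * f x) :
    dTV (μ.withDensity fun x => ENNReal.ofReal ((∫ x, f x ∂μ)⁻¹ * f x))
      (μ.withDensity fun x => ENNReal.ofReal ((∫ x, g x ∂μ)⁻¹ * g x)) ≤ c := by
  set Zf := ∫ x, f x ∂μ
  set Zg := ∫ x, g x ∂μ
  set D := ∫ x, |g x - f x| ∂μ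
  have hD : D ≤ c * Zf := by
    rw [← integral_const_mul]
    exact integral_mono (hgi.sub hfi).abs (hfi.const_mul c) hgf
  have hc : 0 ≤ c := nonneg_of_mul_nonneg_left
    ((integral_nonneg fun x => abs_nonneg _).trans hD) hZf
  have hZgf : |Zg - Zf| ≤ D := by
    simpa [integral_sub hgi hfi] using
      abs_integral_mul_le_integral_abs (ψ := fun _ => (1 : ℝ)) (by simp) (hgi.sub hfi)
  refine Real.sSup_le ?_ hc
  rintro r ⟨ψ, hψm, hψ, rfl⟩
  have hψg := hgi.mul_bdd hψm.aestronglyMeasurable (ae_of_all _ hψ)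
  have hψf := hfi.mul_bdd hψm.aestronglyMeasurable (ae_of_all _ hψ)
  rw [integral_withDensity_ofReal (hf.const_mul _)
      (fun x => mul_nonneg (inv_nonneg.2 hZf.le) (hf0 x)),
    integral_withDensity_ofReal (hg.const_mul _)
      (fun x => mul_nonneg (inv_nonneg.2 hZg.le) (hg0 x))]
  simp only [mul_assoc, integral_const_mul]
  have hI : |∫ x, g x * ψ x ∂μ - ∫ x, f x * ψ x ∂μ| ≤ D := by
    rw [← integral_sub hψg hψf]
    simpa only [sub_mul] using
      abs_integral_mul_le_integral_abs (h := fun x => g x - f x) hψ (hgi.sub hfi)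
  have hIg : |∫ x, g x * ψ x ∂μ| ≤ Zg := by
    simpa [abs_of_nonneg (hg0 _)] using abs_integral_mul_le_integral_abs hψ hgi
  calc _ ≤ 2 * D / Zf / 2 := by
        gcongr
        exact abs_inv_mul_sub_inv_mul_le hZf hZg hIg hZgf hI
    _ = D / Zf := by ring
    _ ≤ c := (div_le_iff₀ hZf).2 hD

end WithDensity

theorem stmt8_general (k m : ℕ)
    (V : E k × E m → ℝ) (hV : ContDiff ℝ (⊤ : ℕ∞) V)
    (M : ℝ) (hM : 0 < M)
    (B₁ B₂ : E m → ℝ) (hB₁ : Continuous B₁)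
    (hB₁M : ∀ z : E m, |B₁ z| ≤ M)
    (hB₂ : Continuous B₂) (hB₂M : ∀ z : E m, |B₂ z| ≤ M) :
    dTV (muB V B₁) (muB V B₂) ≤
      2 * Real.exp (4 * (M + ⨆ z : E m, |Astar V z|)) *
        ⨆ z : E m, |B₁ z - B₂ z| := by
  set δ := ⨆ z : E m, |B₁ z - B₂ z|
  have hδ : ∀ z, |B₂ z - B₁ z| ≤ δ := fun z => by
    rw [abs_sub_comm]
    refine le_ciSup (f := fun z => |B₁ z - B₂ z|) ⟨2 * M, ?_⟩ z
    rintro _ ⟨z, rfl⟩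
    linarith [abs_sub (B₁ z) (B₂ z), hB₁M z, hB₂M z]
  have hVc := hV.continuous
  have hcont : ∀ B : E m → ℝ, Continuous B →
      Continuous fun x : E k × E m => Real.exp (-V x + B x.2) := fun B hB => by fun_prop
  have hTV : dTV (muB V B₁) (muB V B₂) ≤ Real.exp (2 * M) * δ :=
    dTV_withDensity_le (hcont B₁ hB₁).measurable (hcont B₂ hB₂).measurable
      (fun _ => (Real.exp_pos _).le) (fun _ => (Real.exp_pos _).le)
      (hcont B₁ hB₁).integrable_haarT (hcont B₂ hB₂).integrable_haarT
      (integral_exp_pos (hcont B₁ hB₁).integrable_haarT)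
      (integral_exp_pos (hcont B₂ hB₂).integrable_haarT)
      fun x => (Real.abs_exp_add_sub_exp_add_le _ (hB₁M x.2) (hB₂M x.2)).trans
        (by gcongr; exact hδ x.2)
  have hMs : 0 ≤ ⨆ z : E m, |Astar V z| := Real.iSup_nonneg fun _ => abs_nonneg _
  refine hTV.trans (mul_le_mul_of_nonneg_right ?_ ((abs_nonneg _).trans (hδ 0)))
  exact (Real.exp_le_exp.2 (by linarith)).trans
    (le_mul_of_one_le_left (Real.exp_pos _).le one_le_two)

/-- `d_TV(μ_B₁, μ_B₂) ≤ 2 e^(4(M+M⋆)) sup |B₁ - B₂|`. -/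
theorem stmt8 (k m : ℕ) (hk : 1 ≤ k) (hm : 1 ≤ m)
    (V : E k × E m → ℝ) (hV : ContDiff ℝ (⊤ : ℕ∞) V) (hVper : PerZ2 V)
    (M : ℝ) (hM : 0 < M)
    (B₁ B₂ : E m → ℝ) (hB₁ : Continuous B₁) (hB₁p : PerZ B₁)
    (hB₁M : ∀ z : E m, |B₁ z| ≤ M)
    (hB₂ : Continuous B₂) (hB₂p : PerZ B₂) (hB₂M : ∀ z : E m, |B₂ z| ≤ M) :
    dTV (muB V B₁) (muB V B₂) ≤
      2 * Real.exp (4 * (M + ⨆ z : E m, |Astar V z|)) *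
        ⨆ z : E m, |B₁ z - B₂ z| :=
  stmt8_general k m V hV M hM B₁ B₂ hB₁ hB₁M hB₂ hB₂M
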